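/- arXiv:1707.02055 — 3 statements merged into one kernel-verified Lean document; each statement's English description precedes it below -/
import Mathlib

section
/- Let (Y₀, Y₁, D, X) be random elements with D ∈ {0,1}, observed outcome Y = DY₁ + (1-D)Y₀, and suppose (Y₀,Y₁) is independent of D conditionally on X. Assume there is ε > 0 such that ε ≤ P(D=1|X) ≤ 1-ε almost surely, and Y₀, Y₁ are integrable. Then E[Y₁ - Y₀] = E[ DY / p₁(X) - (1-D)Y / p₀(X) ], where p₁(X) = P(D=1|X) and p₀(X) = 1 - p₁(X). -/
/-!
Conditional independence of `Y_d` and `D` given `X` makes the conditional law of `(Y_d, D)`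
given `X` a product measure almost surely, so `E[Y_d D_d | X] = E[Y_d | X] p_d(X)` with
`D_1 = D`, `D_0 = 1 - D`. Since `p_d(X)` is `X`-measurable and at least `ε`, dividing by it
and taking expectations leaves `E[Y_d]`; on `{D_d = 1}` the observed outcome `Y` is `Y_d`.
-/

open MeasureTheory ProbabilityTheory

namespace ProbabilityTheory

section Integrability

variable {Ω : Type*} {m' mΩ : MeasurableSpace Ω} {μ : Measure Ω}

lemma integrable_mul_div_condExp (hm' : m' ≤ mΩ) {W A : Ω → ℝ} {c ε : ℝ}
    (hW_int : Integrable W μ) (hA : AEStronglyMeasurable A μ) (hA_bdd : ∀ᵐ ω ∂μ, ‖A ω‖ ≤ c)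
    (hε : 0 < ε) (hoverlap : ∀ᵐ ω ∂μ, ε ≤ μ[A | m'] ω) :
    Integrable (fun ω ↦ A ω * W ω / μ[A | m'] ω) μ := by
  have hbdd : ∀ᵐ ω ∂μ, ‖A ω / μ[A | m'] ω‖ ≤ c / ε := by
    filter_upwards [hA_bdd, hoverlap] with ω hAω hpω
    rw [norm_div, Real.norm_of_nonneg (hε.le.trans hpω)]
    exact div_le_div₀ ((norm_nonneg _).trans hAω) hAω hε hpω
  have hp : AEMeasurable μ[A | m'] μ := (stronglyMeasurable_condExp.mono hm').aemeasurable
  refine (hW_int.bdd_mul (hA.aemeasurable.div hp).aestronglyMeasurable hbdd).congr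
    (ae_of_all _ fun ω ↦ ?_)
  simp only [Pi.div_apply]
  ring

lemma condExp_one_sub [IsFiniteMeasure μ] (hm' : m' ≤ mΩ) {A : Ω → ℝ}
    (hA_int : Integrable A μ) :
    μ[fun ω ↦ 1 - A ω | m'] =ᵐ[μ] fun ω ↦ 1 - μ[A | m'] ω := by
  filter_upwards [condExp_sub (integrable_const 1) hA_int m'] with ω hω
  rw [← Pi.sub_def, hω, Pi.sub_apply, condExp_const hm']

end Integrability

section CondIndep

variable {Ω : Type*} {m' mΩ : MeasurableSpace Ω} [StandardBorelSpace Ω] {hm' : m' ≤ mΩ}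
  {μ : Measure Ω} [IsFiniteMeasure μ]

theorem CondIndepFun.ae_indepFun_condExpKernel {β β' : Type*} [MeasurableSpace β]
    [MeasurableSpace β'] [MeasurableSpace.CountableOrCountablyGenerated Ω (β × β')]
    {f : Ω → β} {g : Ω → β'} (hfg : CondIndepFun m' hm' f g μ) (hf : Measurable f)
    (hg : Measurable g) :
    ∀ᵐ ω ∂μ, f ⟂ᵢ[condExpKernel μ m' ω] g := by
  filter_upwards [ae_of_ae_trim hm' ((condIndepFun_iff_map_prod_eq_prod_map_map hf hg).1 hfg)]
    with ω hω
  rw [indepFun_iff_map_prod_eq_prod_map_map hf.aemeasurable hg.aemeasurable]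
  simpa [Kernel.map_apply _ hf, Kernel.map_apply _ hg, Kernel.map_apply _ (hf.prodMk hg),
    Kernel.prod_apply] using hω

theorem CondIndepFun.condExp_mul {f g : Ω → ℝ} (hfg : CondIndepFun m' hm' f g μ)
    (hf : Measurable f) (hg : Measurable g) (hf_int : Integrable f μ) (hg_int : Integrable g μ)
    (hfg_int : Integrable (f * g) μ) :
    μ[f * g | m'] =ᵐ[μ] μ[f | m'] * μ[g | m'] := by
  filter_upwards [condExp_ae_eq_integral_condExpKernel hm' hfg_int,
    condExp_ae_eq_integral_condExpKernel hm' hf_int,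
    condExp_ae_eq_integral_condExpKernel hm' hg_int,
    hfg.ae_indepFun_condExpKernel hf hg] with ω hfgω hfω hgω h_indep
  rw [hfgω, Pi.mul_apply, hfω, hgω]
  exact h_indep.integral_mul_eq_mul_integral hf.aestronglyMeasurable hg.aestronglyMeasurable

theorem CondIndepFun.integral_mul_div_condExp {W A : Ω → ℝ} {c ε : ℝ}
    (hWA : CondIndepFun m' hm' W A μ) (hW : Measurable W) (hA : Measurable A)
    (hW_int : Integrable W μ) (hA_bdd : ∀ᵐ ω ∂μ, ‖A ω‖ ≤ c) (hε : 0 < ε)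
    (hoverlap : ∀ᵐ ω ∂μ, ε ≤ μ[A | m'] ω) :
    ∫ ω, A ω * W ω / μ[A | m'] ω ∂μ = ∫ ω, W ω ∂μ := by
  set q : Ω → ℝ := fun ω ↦ (μ[A | m'] ω)⁻¹ with hq
  have hq_meas : StronglyMeasurable[m'] q :=
    stronglyMeasurable_condExp.measurable.inv.stronglyMeasurable
  have hq_bdd : ∀ᵐ ω ∂μ, ‖q ω‖ ≤ ε⁻¹ := by
    filter_upwards [hoverlap] with ω hω
    rw [hq, norm_inv, Real.norm_of_nonneg (hε.le.trans hω)]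
    exact inv_anti₀ hε hω
  have hWA_int : Integrable (W * A) μ := hW_int.mul_bdd hA.aestronglyMeasurable hA_bdd
  have hA_int : Integrable A μ := .of_bound hA.aestronglyMeasurable c hA_bdd
  calc ∫ ω, A ω * W ω / μ[A | m'] ω ∂μ = ∫ ω, (q * (W * A)) ω ∂μ := by
        congr with ω
        simp only [hq, Pi.mul_apply]
        ring
    _ = ∫ ω, (q * μ[W * A | m']) ω ∂μ := by
        rw [← integral_condExp hm']
        exact integral_congr_ae
          (condExp_stronglyMeasurable_mul_of_bound hm' hq_meas hWA_int _ hq_bdd)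
    _ = ∫ ω, μ[W | m'] ω ∂μ := by
        refine integral_congr_ae ?_
        filter_upwards [hWA.condExp_mul hW hA hW_int hA_int hWA_int, hoverlap] with ω hω hpω
        rw [Pi.mul_apply, hω, Pi.mul_apply, hq]
        field_simp [(hε.trans_le hpω).ne']
    _ = ∫ ω, W ω ∂μ := integral_condExp hm'

end CondIndep

end ProbabilityTheory

theorem stmt_3_general {Ω E : Type*} [mΩ : MeasurableSpace Ω] [StandardBorelSpace Ω]
    [MeasurableSpace E]
    (μ : Measure Ω) [IsProbabilityMeasure μ]
    (Y0 Y1 D : Ω → ℝ) (X : Ω → E)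
    (hY0 : Measurable Y0) (hY1 : Measurable Y1) (hD : Measurable D) (hX : Measurable X)
    (hD01 : ∀ ω, D ω = 0 ∨ D ω = 1)
    (hY0int : Integrable Y0 μ) (hY1int : Integrable Y1 μ)
    -- unconfoundedness: (Y₀, Y₁) ⫫ D | X
    (hunconf : CondIndepFun (MeasurableSpace.comap X inferInstance) hX.comap_le
      (fun ω => (Y0 ω, Y1 ω)) D μ)
    -- propensity score p₁(X) = P(D = 1 | X)
    (p1X : Ω → ℝ)
    (hp1X : p1X = μ[D | MeasurableSpace.comap X inferInstance])
    -- overlap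
    (ε : ℝ) (hε : 0 < ε)
    (hoverlap : ∀ᵐ ω ∂μ, ε ≤ p1X ω ∧ p1X ω ≤ 1 - ε)
    -- observed outcome Y = DY₁ + (1−D)Y₀
    (Y : Ω → ℝ) (hY : ∀ ω, Y ω = D ω * Y1 ω + (1 - D ω) * Y0 ω) :
    ∫ ω, (Y1 ω - Y0 ω) ∂μ =
      ∫ ω, D ω * Y ω / p1X ω - (1 - D ω) * Y ω / (1 - p1X ω) ∂μ := by
  subst hp1X
  set m' : MeasurableSpace Ω := MeasurableSpace.comap X inferInstance
  have hm' : m' ≤ mΩ := hX.comap_le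
  have hD_bdd : ∀ᵐ ω ∂μ, ‖D ω‖ ≤ 1 := .of_forall fun ω ↦ by rcases hD01 ω with h | h <;> simp [h]
  have hD'_bdd : ∀ᵐ ω ∂μ, ‖1 - D ω‖ ≤ 1 :=
    .of_forall fun ω ↦ by rcases hD01 ω with h | h <;> simp [h]
  have hp0 := condExp_one_sub (μ := μ) hm' (.of_bound hD.aestronglyMeasurable 1 hD_bdd)
  have hoverlap1 : ∀ᵐ ω ∂μ, ε ≤ μ[D | m'] ω := hoverlap.mono fun _ ↦ And.left
  have hoverlap0 : ∀ᵐ ω ∂μ, ε ≤ μ[fun ω ↦ 1 - D ω | m'] ω := by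
    filter_upwards [hoverlap, hp0] with ω hω hpω
    linarith [hω.2, hpω]
  have hY1D : CondIndepFun m' hm' Y1 D μ := hunconf.comp measurable_snd measurable_id
  have hY0D : CondIndepFun m' hm' Y0 (fun ω ↦ 1 - D ω) μ :=
    hunconf.comp measurable_fst (measurable_const.sub measurable_id)
  have hIPW : (fun ω ↦ D ω * Y ω / μ[D | m'] ω - (1 - D ω) * Y ω / (1 - μ[D | m'] ω))
      =ᵐ[μ] fun ω ↦ D ω * Y1 ω / μ[D | m'] ω
        - (1 - D ω) * Y0 ω / μ[fun ω ↦ 1 - D ω | m'] ω := by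
    filter_upwards [hp0] with ω hω
    rw [hω, hY]
    rcases hD01 ω with h | h <;> simp [h]
  rw [integral_congr_ae hIPW,
    integral_sub (integrable_mul_div_condExp hm' hY1int (by fun_prop) hD_bdd hε hoverlap1)
      (integrable_mul_div_condExp hm' hY0int (by fun_prop) hD'_bdd hε hoverlap0),
    hY1D.integral_mul_div_condExp hY1 hD hY1int hD_bdd hε hoverlap1,
    hY0D.integral_mul_div_condExp hY0 (by fun_prop) hY0int hD'_bdd hε hoverlap0,
    integral_sub hY1int hY0int]

/-- Inverse-propensity-weighting identification of the average treatment effect under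
unconfoundedness and overlap:
`E[Y₁ − Y₀] = E[DY/p₁(X) − (1−D)Y/p₀(X)]` with `p₁(X) = P(D=1|X)`. -/
theorem stmt_3 {Ω E : Type*} [mΩ : MeasurableSpace Ω] [StandardBorelSpace Ω] [Nonempty Ω]
    [MeasurableSpace E]
    (μ : Measure Ω) [IsProbabilityMeasure μ]
    (Y0 Y1 D : Ω → ℝ) (X : Ω → E)
    (hY0 : Measurable Y0) (hY1 : Measurable Y1) (hD : Measurable D) (hX : Measurable X)
    (hD01 : ∀ ω, D ω = 0 ∨ D ω = 1)
    (hY0int : Integrable Y0 μ) (hY1int : Integrable Y1 μ)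
    -- unconfoundedness: (Y₀, Y₁) ⫫ D | X
    (hunconf : CondIndepFun (MeasurableSpace.comap X inferInstance) hX.comap_le
      (fun ω => (Y0 ω, Y1 ω)) D μ)
    -- propensity score p₁(X) = P(D = 1 | X)
    (p1X : Ω → ℝ)
    (hp1X : p1X = μ[D | MeasurableSpace.comap X inferInstance])
    -- overlap
    (ε : ℝ) (hε : 0 < ε)
    (hoverlap : ∀ᵐ ω ∂μ, ε ≤ p1X ω ∧ p1X ω ≤ 1 - ε)
    -- observed outcome Y = DY₁ + (1−D)Y₀
    (Y : Ω → ℝ) (hY : ∀ ω, Y ω = D ω * Y1 ω + (1 - D ω) * Y0 ω) :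
    ∫ ω, (Y1 ω - Y0 ω) ∂μ =
      ∫ ω, D ω * Y ω / p1X ω - (1 - D ω) * Y ω / (1 - p1X ω) ∂μ :=
  stmt_3_general (mΩ := mΩ) μ Y0 Y1 D X hY0 hY1 hD hX hD01 hY0int hY1int hunconf p1X hp1X ε hε
    hoverlap Y hY
end

section
/- Let (Y₀, Y₁, D, X) be as in the unconfoundedness setup: Y = DY₁ + (1-D)Y₀, (Y₀,Y₁) ⫫ D | X, ε ≤ p₁(X) ≤ 1-ε a.s. with p₁(X) = P(D=1|X), and Y₀, Y₁ integrable, with P(D=1) > 0. Then E[Y₁ - Y₀ | D=1] = E[Y | D=1] - E[ p₁(X)·Y / p₀(X) | D=0 ] / E[ p₁(X)/p₀(X) | D=0 ], where p₀(X) = 1 - p₁(X). -/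
/-!
Let `A = {D = 1}` and `p = P(A | X)`. Conditional independence of `Y₀` and `D` given `X` says
`E[1_A 1_{Y₀ ∈ t} | X] = p · P(Y₀ ∈ t | X)`; testing against bounded `σ(X)`-measurable weights `r`
and then conditioning on `σ(Y₀)` upgrades this to `∫_A r Y₀ = ∫ r p Y₀`. With the odds weight
`r = p / (1 - p)` (bounded by overlap) this gives
`∫_{Aᶜ} p/(1-p) · Y₀ = ∫ p Y₀ = ∫_A Y₀`, and with `Y₀` replaced by `1`, `∫_{Aᶜ} p/(1-p) = P(A)`:
the reweighted control group reproduces the treated group's mean of `Y₀`.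
-/

open MeasureTheory ProbabilityTheory

namespace MeasureTheory

variable {Ω : Type*} {m mΩ : MeasurableSpace Ω} {μ : Measure Ω}

lemma integral_cond_eq_inv_mul_setIntegral (f : Ω → ℝ) (s : Set Ω) :
    ∫ x, f x ∂μ[|s] = (μ.real s)⁻¹ * ∫ x in s, f x ∂μ :=
  (setAverage_eq' μ f s).symm.trans (setAverage_eq μ f s)

lemma norm_condExp_indicator_le_one (s : Set Ω) : ∀ᵐ x ∂μ, ‖(μ⟦s | m⟧) x‖ ≤ 1 :=
  ae_bdd_abs_condExp_of_ae_bdd_abs (ae_of_all _ fun x => by by_cases hx : x ∈ s <;> simp [hx])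

section Finite

variable [IsFiniteMeasure μ]

lemma integral_mul_eq_of_forall_setIntegral_preimage_eq {u v g : Ω → ℝ} (hg : Measurable g)
    (hu : Integrable u μ) (hv : Integrable v μ)
    (hug : Integrable (u * g) μ) (hvg : Integrable (v * g) μ)
    (h : ∀ t, MeasurableSet t → ∫ x in g ⁻¹' t, u x ∂μ = ∫ x in g ⁻¹' t, v x ∂μ) :
    ∫ x, u x * g x ∂μ = ∫ x, v x * g x ∂μ := by
  set n := MeasurableSpace.comap g inferInstance
  have hn : n ≤ mΩ := hg.comap_le
  have hgn : StronglyMeasurable[n] g := (comap_measurable g).stronglyMeasurable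
  have huv : μ[v | n] =ᵐ[μ] μ[u | n] :=
    ae_eq_condExp_of_forall_setIntegral_eq hn hu (fun _ _ _ => integrable_condExp.integrableOn)
      (fun s ⟨t, ht, hs⟩ _ => by rw [setIntegral_condExp hn hv ⟨t, ht, hs⟩, ← hs, h t ht])
      stronglyMeasurable_condExp.aestronglyMeasurable
  calc ∫ x, u x * g x ∂μ = ∫ x, μ[u * g | n] x ∂μ := (integral_condExp hn).symm
    _ = ∫ x, μ[v * g | n] x ∂μ := by
      refine integral_congr_ae ?_
      filter_upwards [condExp_mul_of_stronglyMeasurable_right hgn hug hu,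
        condExp_mul_of_stronglyMeasurable_right hgn hvg hv, huv] with x hux hvx hx
      rw [hux, hvx, Pi.mul_apply, Pi.mul_apply, hx]
    _ = ∫ x, v x * g x ∂μ := integral_condExp hn

lemma integral_mul_condExp_of_bound (hm : m ≤ mΩ) {r h : Ω → ℝ} (hr : StronglyMeasurable[m] r)
    {C : ℝ} (hrC : ∀ᵐ x ∂μ, ‖r x‖ ≤ C) (hh : Integrable h μ) :
    ∫ x, r x * μ[h | m] x ∂μ = ∫ x, r x * h x ∂μ :=
  (integral_congr_ae (condExp_stronglyMeasurable_mul_of_bound hm hr hh C hrC).symm).trans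
    (integral_condExp hm)

lemma setIntegral_eq_integral_mul_condExp_indicator (hm : m ≤ mΩ) {r : Ω → ℝ}
    (hr : StronglyMeasurable[m] r) {C : ℝ} (hrC : ∀ᵐ x ∂μ, ‖r x‖ ≤ C)
    {s : Set Ω} (hs : MeasurableSet s) :
    ∫ x in s, r x ∂μ = ∫ x, r x * (μ⟦s | m⟧) x ∂μ := by
  rw [integral_mul_condExp_of_bound hm hr hrC ((integrable_const 1).indicator hs),
    ← integral_indicator hs]
  congr 1 with x
  by_cases hx : x ∈ s <;> simp [hx]

lemma setIntegral_mul_eq_integral_mul_condExp_indicator_mul (hm : m ≤ mΩ) {A : Set Ω}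
    (hA : MeasurableSet A) {g : Ω → ℝ} (hg : Measurable g) (hgi : Integrable g μ)
    (hind : ∀ t, MeasurableSet t →
      μ⟦g ⁻¹' t ∩ A | m⟧ =ᵐ[μ] fun x => (μ⟦g ⁻¹' t | m⟧) x * (μ⟦A | m⟧) x)
    {r : Ω → ℝ} (hr : StronglyMeasurable[m] r) {C : ℝ} (hrC : ∀ᵐ x ∂μ, ‖r x‖ ≤ C) :
    ∫ x in A, r x * g x ∂μ = ∫ x, r x * (μ⟦A | m⟧) x * g x ∂μ := by
  set p := μ⟦A | m⟧
  have hrp : StronglyMeasurable[m] (r * p) := hr.mul stronglyMeasurable_condExp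
  have hrpC : ∀ᵐ x ∂μ, ‖(r * p) x‖ ≤ C := by
    filter_upwards [hrC, norm_condExp_indicator_le_one A] with x hrx hpx
    rw [Pi.mul_apply, norm_mul]
    exact (mul_le_of_le_one_right (norm_nonneg _) hpx).trans hrx
  have hAr : ∀ᵐ x ∂μ, ‖A.indicator r x‖ ≤ C :=
    hrC.mono fun x hx => (norm_indicator_le_norm_self r x).trans hx
  have hArm : AEStronglyMeasurable (A.indicator r) μ :=
    ((hr.mono hm).indicator hA).aestronglyMeasurable
  have hrpm : AEStronglyMeasurable (r * p) μ := (hrp.mono hm).aestronglyMeasurable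
  have hindicator : ∫ x in A, r x * g x ∂μ = ∫ x, A.indicator r x * g x ∂μ := by
    rw [← integral_indicator hA]
    congr 1 with x
    by_cases hx : x ∈ A <;> simp [hx]
  rw [hindicator]
  refine integral_mul_eq_of_forall_setIntegral_preimage_eq hg
    ((integrable_const C).mono' hArm hAr) ((integrable_const C).mono' hrpm hrpC)
    (hgi.bdd_mul hArm hAr) (hgi.bdd_mul hrpm hrpC) fun t ht => ?_
  calc ∫ x in g ⁻¹' t, A.indicator r x ∂μ = ∫ x in g ⁻¹' t ∩ A, r x ∂μ :=
        setIntegral_indicator hA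
    _ = ∫ x, r x * (μ⟦g ⁻¹' t ∩ A | m⟧) x ∂μ :=
        setIntegral_eq_integral_mul_condExp_indicator hm hr hrC ((hg ht).inter hA)
    _ = ∫ x, (r * p) x * (μ⟦g ⁻¹' t | m⟧) x ∂μ :=
        integral_congr_ae ((hind t ht).mono fun x hx => by simp only [hx, Pi.mul_apply]; ring)
    _ = ∫ x in g ⁻¹' t, (r * p) x ∂μ :=
        (setIntegral_eq_integral_mul_condExp_indicator hm hrp hrpC (hg ht)).symm

end Finite

lemma setIntegral_compl_odds_mul_eq_setIntegral (hm : m ≤ mΩ) {A : Set Ω} (hA : MeasurableSet A)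
    {g : Ω → ℝ} (hgi : Integrable g μ)
    (hK : ∀ r : Ω → ℝ, StronglyMeasurable[m] r → ∀ C, (∀ᵐ x ∂μ, ‖r x‖ ≤ C) →
      ∫ x in A, r x * g x ∂μ = ∫ x, r x * (μ⟦A | m⟧) x * g x ∂μ)
    {ε : ℝ} (hε : 0 < ε) (hp : ∀ᵐ x ∂μ, (μ⟦A | m⟧) x ≤ 1 - ε) :
    ∫ x in Aᶜ, (μ⟦A | m⟧) x / (1 - (μ⟦A | m⟧) x) * g x ∂μ = ∫ x in A, g x ∂μ := by
  set p := μ⟦A | m⟧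
  set q : Ω → ℝ := fun x => p x / (1 - p x)
  have hq : StronglyMeasurable[m] q :=
    (stronglyMeasurable_condExp.measurable.div
      (measurable_const.sub stronglyMeasurable_condExp.measurable)).stronglyMeasurable
  have hqC : ∀ᵐ x ∂μ, ‖q x‖ ≤ ε⁻¹ := by
    filter_upwards [hp, norm_condExp_indicator_le_one A] with x hpx hpx'
    rw [norm_div, Real.norm_of_nonneg (by linarith : (0 : ℝ) ≤ 1 - p x), div_le_iff₀ (by linarith)]
    calc ‖p x‖ ≤ 1 := hpx'
      _ ≤ ε⁻¹ * (1 - p x) := by rw [← div_eq_inv_mul, le_div_iff₀ hε]; linarith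
  have hqp : ∀ᵐ x ∂μ, q x * g x - q x * p x * g x = 1 * p x * g x := by
    filter_upwards [hp] with x hpx
    have : 1 - p x ≠ 0 := by linarith
    simp only [q]
    field_simp
  have hqm : AEStronglyMeasurable q μ := (hq.mono hm).aestronglyMeasurable
  have hqg : Integrable (fun x => q x * g x) μ := hgi.bdd_mul hqm hqC
  have hqpg : Integrable (fun x => q x * p x * g x) μ := by
    refine hgi.bdd_mul (c := ε⁻¹)
      (hqm.mul (stronglyMeasurable_condExp.mono hm).aestronglyMeasurable) ?_
    filter_upwards [hqC, norm_condExp_indicator_le_one A] with x hqx hpx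
    rw [norm_mul]
    exact (mul_le_of_le_one_right (norm_nonneg _) hpx).trans hqx
  calc ∫ x in Aᶜ, q x * g x ∂μ = ∫ x, q x * g x ∂μ - ∫ x in A, q x * g x ∂μ := by
        rw [← integral_add_compl hA hqg]; ring
    _ = ∫ x, (q x * g x - q x * p x * g x) ∂μ := by
        rw [hK q hq _ hqC, integral_sub hqg hqpg]
    _ = ∫ x in A, 1 * g x ∂μ := by
        rw [integral_congr_ae hqp]
        exact (hK (fun _ => 1) stronglyMeasurable_const 1 (by simp)).symm
    _ = ∫ x in A, g x ∂μ := by simp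

end MeasureTheory

theorem stmt_4_general {Ω E : Type*} [mΩ : MeasurableSpace Ω] [StandardBorelSpace Ω]
    [MeasurableSpace E]
    (μ : Measure Ω) [IsProbabilityMeasure μ]
    (Y0 Y1 D : Ω → ℝ) (X : Ω → E)
    (hY0 : Measurable Y0) (hD : Measurable D) (hX : Measurable X)
    (hD01 : ∀ ω, D ω = 0 ∨ D ω = 1)
    (hY0int : Integrable Y0 μ) (hY1int : Integrable Y1 μ)
    -- unconfoundedness: (Y₀, Y₁) ⫫ D | X
    (hunconf : CondIndepFun (MeasurableSpace.comap X inferInstance) hX.comap_le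
      (fun ω => (Y0 ω, Y1 ω)) D μ)
    -- propensity score p₁(X) = P(D = 1 | X)
    (p1X : Ω → ℝ)
    (hp1X : p1X = μ[D | MeasurableSpace.comap X inferInstance])
    -- overlap
    (ε : ℝ) (hε : 0 < ε)
    (hoverlap : ∀ᵐ ω ∂μ, ε ≤ p1X ω ∧ p1X ω ≤ 1 - ε)
    -- P(D = 1) > 0
    (hDpos : 0 < μ {ω | D ω = 1})
    -- observed outcome Y = DY₁ + (1−D)Y₀
    (Y : Ω → ℝ) (hY : ∀ ω, Y ω = D ω * Y1 ω + (1 - D ω) * Y0 ω) :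
    ∫ ω, (Y1 ω - Y0 ω) ∂μ[|{ω | D ω = 1}] =
      (∫ ω, Y ω ∂μ[|{ω | D ω = 1}]) -
        (∫ ω, p1X ω * Y ω / (1 - p1X ω) ∂μ[|{ω | D ω = 0}]) /
          (∫ ω, p1X ω / (1 - p1X ω) ∂μ[|{ω | D ω = 0}]) := by
  set A := {ω | D ω = 1}
  have hA : MeasurableSet A := hD (measurableSet_singleton 1)
  have hAc : {ω | D ω = 0} = Aᶜ := by ext ω; rcases hD01 ω with h | h <;> simp [A, h]
  have hDA : D = A.indicator fun _ => 1 := by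
    ext ω; rcases hD01 ω with h | h <;> simp [A, h]
  rw [hDA] at hp1X
  have hind := (condIndepFun_iff_condExp_inter_preimage_eq_mul hY0 hD).mp
    (hunconf.comp measurable_fst measurable_id)
  have hp : ∀ᵐ ω ∂μ, (μ⟦A | MeasurableSpace.comap X inferInstance⟧) ω ≤ 1 - ε := by
    rw [← hp1X]; exact hoverlap.mono fun _ h => h.2
  have hnum := setIntegral_compl_odds_mul_eq_setIntegral hX.comap_le hA hY0int
    (fun r hr C hrC => setIntegral_mul_eq_integral_mul_condExp_indicator_mul hX.comap_le hA hY0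
      hY0int (fun t ht => hind t {1} ht (measurableSet_singleton 1)) hr hrC) hε hp
  have hden := setIntegral_compl_odds_mul_eq_setIntegral hX.comap_le hA (integrable_const 1)
    (fun r hr C hrC => by
      simpa using setIntegral_eq_integral_mul_condExp_indicator hX.comap_le hr hrC hA) hε hp
  simp only [mul_one, setIntegral_const, smul_eq_mul] at hden
  rw [← hp1X] at hnum hden
  have hAc0 : μ.real Aᶜ ≠ 0 := fun h => by
    rw [setIntegral_measure_zero _ ((measureReal_eq_zero_iff).mp h)] at hden
    exact (ENNReal.toReal_pos hDpos.ne' (measure_ne_top μ A)).ne hden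
  have hYA : ∫ ω in A, Y ω ∂μ = ∫ ω in A, Y1 ω ∂μ :=
    setIntegral_congr_fun hA fun ω (hω : D ω = 1) => by rw [hY, hω]; ring
  have hYAc : ∫ ω in Aᶜ, p1X ω * Y ω / (1 - p1X ω) ∂μ =
      ∫ ω in Aᶜ, p1X ω / (1 - p1X ω) * Y0 ω ∂μ :=
    setIntegral_congr_fun hA.compl fun ω hω => by
      rw [hY, (hD01 ω).resolve_right hω]; ring
  simp only [hAc, integral_cond_eq_inv_mul_setIntegral]
  rw [integral_sub hY1int.integrableOn hY0int.integrableOn, hYA, hYAc, hnum, hden]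
  field_simp

/-- Identification of the average treatment effect on the treated by
inverse-propensity reweighting of the control group, under unconfoundedness and
overlap:
`E[Y₁−Y₀|D=1] = E[Y|D=1] − E[p₁(X)Y/p₀(X)|D=0] / E[p₁(X)/p₀(X)|D=0]`. -/
theorem stmt_4 {Ω E : Type*} [mΩ : MeasurableSpace Ω] [StandardBorelSpace Ω] [Nonempty Ω]
    [MeasurableSpace E]
    (μ : Measure Ω) [IsProbabilityMeasure μ]
    (Y0 Y1 D : Ω → ℝ) (X : Ω → E)
    (hY0 : Measurable Y0) (hY1 : Measurable Y1) (hD : Measurable D) (hX : Measurable X)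
    (hD01 : ∀ ω, D ω = 0 ∨ D ω = 1)
    (hY0int : Integrable Y0 μ) (hY1int : Integrable Y1 μ)
    -- unconfoundedness: (Y₀, Y₁) ⫫ D | X
    (hunconf : CondIndepFun (MeasurableSpace.comap X inferInstance) hX.comap_le
      (fun ω => (Y0 ω, Y1 ω)) D μ)
    -- propensity score p₁(X) = P(D = 1 | X)
    (p1X : Ω → ℝ)
    (hp1X : p1X = μ[D | MeasurableSpace.comap X inferInstance])
    -- overlap
    (ε : ℝ) (hε : 0 < ε)
    (hoverlap : ∀ᵐ ω ∂μ, ε ≤ p1X ω ∧ p1X ω ≤ 1 - ε)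
    -- P(D = 1) > 0
    (hDpos : 0 < μ {ω | D ω = 1})
    -- observed outcome Y = DY₁ + (1−D)Y₀
    (Y : Ω → ℝ) (hY : ∀ ω, Y ω = D ω * Y1 ω + (1 - D ω) * Y0 ω) :
    ∫ ω, (Y1 ω - Y0 ω) ∂μ[|{ω | D ω = 1}] =
      (∫ ω, Y ω ∂μ[|{ω | D ω = 1}]) -
        (∫ ω, p1X ω * Y ω / (1 - p1X ω) ∂μ[|{ω | D ω = 0}]) /
          (∫ ω, p1X ω / (1 - p1X ω) ∂μ[|{ω | D ω = 0}]) :=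
  stmt_4_general (mΩ := mΩ) μ Y0 Y1 D X hY0 hD hX hD01 hY0int hY1int hunconf p1X hp1X ε hε hoverlap
    hDpos Y hY
end

section
/- Let A, B > 0, let p ∈ (0,1), and define g(q) = A/q + B/(1-q) for q ∈ (0,1). Let c = A(1-p) / (A(1-p) + Bp). Then for q ∈ (0,1), g(p) ≥ g(q) if and only if min{p, c} ≤ q ≤ max{p, c}. -/
/-- Characterization of the design shares `q` that improve upon random sampling:
with `g(q) = A/q + B/(1-q)` and `c = A(1-p)/(A(1-p)+Bp)`,
`g(p) ≥ g(q)` iff `min p c ≤ q ≤ max p c`. -/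
theorem stmt_7 (A B p : ℝ) (hA : 0 < A) (hB : 0 < B) (hp : p ∈ Set.Ioo (0 : ℝ) 1)
    (g : ℝ → ℝ) (hg : ∀ q, g q = A / q + B / (1 - q))
    (c : ℝ) (hc : c = A * (1 - p) / (A * (1 - p) + B * p)) :
    ∀ q ∈ Set.Ioo (0 : ℝ) 1, (g q ≤ g p ↔ min p c ≤ q ∧ q ≤ max p c) := by
  obtain ⟨hp0, hp1⟩ := hp
  intro q hq
  obtain ⟨hq0, hq1⟩ := hq
  have hp1' : 0 < 1 - p := by linarith
  have hq1' : 0 < 1 - q := by linarith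
  have hD : 0 < A * (1 - p) + B * p := by positivity
  have hden : 0 < p * q * (1 - p) * (1 - q) := by positivity
  have hkey : g p - g q =
      ((q - p) * (c - q) * (A * (1 - p) + B * p)) / (p * q * (1 - p) * (1 - q)) := by
    rw [hg, hg, hc]
    field_simp
    ring
  constructor
  · intro h
    have h2 : 0 ≤ (q - p) * (c - q) := by
      by_contra hneg
      push_neg at hneg
      have hlt : g p - g q < 0 := by
        rw [hkey]
        apply div_neg_of_neg_of_pos _ hden
        nlinarith
      linarith
    rcases le_total p c with hpc | hpc
    · rw [min_eq_left hpc, max_eq_right hpc]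
      constructor
      · by_contra hcon
        push_neg at hcon
        nlinarith
      · by_contra hcon
        push_neg at hcon
        nlinarith
    · rw [min_eq_right hpc, max_eq_left hpc]
      constructor
      · by_contra hcon
        push_neg at hcon
        nlinarith
      · by_contra hcon
        push_neg at hcon
        nlinarith
  · rintro ⟨h1, h2⟩
    have h3 : 0 ≤ (q - p) * (c - q) := by
      rcases le_total p c with hpc | hpc
      · rw [min_eq_left hpc] at h1
        rw [max_eq_right hpc] at h2
        have := mul_nonneg (by linarith : (0:ℝ) ≤ q - p) (by linarith : (0:ℝ) ≤ c - q)
        linarith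
      · rw [min_eq_right hpc] at h1
        rw [max_eq_left hpc] at h2
        nlinarith
    have : 0 ≤ g p - g q := by
      rw [hkey]
      exact div_nonneg (mul_nonneg h3 hD.le) hden.le
    linarith
end
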